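/- arXiv:2311.08003 — 2 statements merged into one kernel-verified Lean document; each statement's English description precedes it below -/
import Mathlib

section
/- Let (Q,R) be a gentle presentation. The graded vector space k(Γ∥B), with degree-m component freely spanned by Γ_m∥B and maps d^m(γ,α) = Σ_{b arrow, (bγ,bα)∈Γ_{m+1}∥B} (bγ,bα) − (−1)^m Σ_{a arrow, (γa,αa)∈Γ_{m+1}∥B} (γa,αa), is a cochain complex; that is, d^{m+1} ∘ d^m = 0 for all m ≥ 0. -/
/-!
Common framework: quivers, paths (as a start vertex together with a list of
composable arrows, listed in order of traversal, so that the paper's path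
`c_m ⋯ c_1` corresponds to the list `[c_1, …, c_m]`), gentle and quadratic
monomial presentations, the cochain complex `k(Γ ∥ B)` and the chain complex
`k(B ⊙ Γ)` of the paper.
-/

namespace GentleTT

structure Quiv where
  V : Type
  A : Type
  [fintV : Fintype V]
  [fintA : Fintype A]
  [decV : DecidableEq V]
  [decA : DecidableEq A]
  src : A → V
  tgt : A → V

attribute [instance] Quiv.fintV Quiv.fintA Quiv.decV Quiv.decA

/-- A "path datum": a start vertex together with the list of arrows traversed. -/
abbrev PathDat (Q : Quiv) := Q.V × List Q.A

def psrc (Q : Quiv) (p : PathDat Q) : Q.V := p.1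

def ptgt (Q : Quiv) (p : PathDat Q) : Q.V := p.2.getLast?.elim p.1 Q.tgt

def plen (Q : Quiv) (p : PathDat Q) : ℕ := p.2.length

/-- `p` is a genuine path: consecutive arrows compose, and the recorded start
vertex is the source of the first arrow (if any). -/
def Ok (Q : Quiv) (p : PathDat Q) : Prop :=
  p.2.Chain' (fun a b => Q.tgt a = Q.src b) ∧ ∀ a ∈ p.2.head?, Q.src a = p.1

/-- `p` is a path none of whose length-2 subpaths lies in `R`
(an element of the basis `B` of `kQ/⟨R⟩`). -/
def InB (Q : Quiv) (R : Set (Q.A × Q.A)) (p : PathDat Q) : Prop :=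
  Ok Q p ∧ p.2.Chain' (fun a b => (a, b) ∉ R)

/-- `p` is a path all of whose length-2 subpaths lie in `R` (an element of `Γ`). -/
def InG (Q : Quiv) (R : Set (Q.A × Q.A)) (p : PathDat Q) : Prop :=
  Ok Q p ∧ p.2.Chain' (fun a b => (a, b) ∈ R)

/-- Parallel paths: same source and same target. -/
def Par (Q : Quiv) (p q : PathDat Q) : Prop :=
  psrc Q p = psrc Q q ∧ ptgt Q p = ptgt Q q

/-- Antiparallel paths: `s(p) = t(q)` and `t(p) = s(q)`. -/
def AntiPar (Q : Quiv) (p q : PathDat Q) : Prop :=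
  psrc Q p = ptgt Q q ∧ ptgt Q p = psrc Q q

/-- A cycle: a path of positive length whose source equals its target. -/
def IsCycle (Q : Quiv) (p : PathDat Q) : Prop :=
  Ok Q p ∧ p.2 ≠ [] ∧ psrc Q p = ptgt Q p

/-- Rotation of a cycle: the paper's `rot (c_m ⋯ c_1) = c_{m-1} ⋯ c_1 c_m`
(the last arrow traversed becomes the first one traversed). -/
def rotP (Q : Quiv) (p : PathDat Q) : PathDat Q :=
  match p.2.getLast? with
  | none => p
  | some a => (Q.src a, a :: p.2.dropLast)

/-- Iterated rotation `rot^i`. -/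
def rotI (Q : Quiv) (i : ℕ) (p : PathDat Q) : PathDat Q := (rotP Q)^[i] p

def powL {α : Type} (l : List α) : ℕ → List α
  | 0 => []
  | n + 1 => l ++ powL l n

/-- The `n`-th power `p^n` of a (cyclic) path. -/
def powP (Q : Quiv) (p : PathDat Q) (n : ℕ) : PathDat Q := (p.1, powL p.2 n)

/-- A primitive cycle: a cycle that is not a proper power of another cycle. -/
def IsPrimitive (Q : Quiv) (p : PathDat Q) : Prop :=
  IsCycle Q p ∧ ∀ (q : PathDat Q) (n : ℕ), IsCycle Q q → 2 ≤ n → p ≠ powP Q q n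

/-- The period of a cycle: the least `i ≥ 1` with `rot^i p = p`. -/
noncomputable def periodP (Q : Quiv) (p : PathDat Q) : ℕ :=
  sInf {i : ℕ | 1 ≤ i ∧ rotI Q i p = p}

/-- Two cycles are conjugate (belong to the same circuit) if one is obtained
from the other by iterated rotation. -/
def RotEquiv (Q : Quiv) (p q : PathDat Q) : Prop := ∃ i : ℕ, rotI Q i p = q

/-- A cocomplete cycle: `p² ∈ B`. -/
def Cocomplete (Q : Quiv) (R : Set (Q.A × Q.A)) (p : PathDat Q) : Prop :=
  IsCycle Q p ∧ InB Q R (powP Q p 2)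

/-- A complete cycle: `p² ∈ Γ`. -/
def Complete (Q : Quiv) (R : Set (Q.A × Q.A)) (p : PathDat Q) : Prop :=
  IsCycle Q p ∧ InG Q R (powP Q p 2)

/-- `B`-maximal path: in `B` and not a proper subpath of another element of `B`. -/
def BMax (Q : Quiv) (R : Set (Q.A × Q.A)) (p : PathDat Q) : Prop :=
  InB Q R p ∧ ∀ q : PathDat Q, InB Q R q → p.2 <:+: q.2 → p.2 = q.2

/-- `Γ`-maximal path: in `Γ` and not a proper subpath of another element of `Γ`. -/
def GMax (Q : Quiv) (R : Set (Q.A × Q.A)) (p : PathDat Q) : Prop :=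
  InG Q R p ∧ ∀ q : PathDat Q, InG Q R q → p.2 <:+: q.2 → p.2 = q.2

def Adj (Q : Quiv) (v w : Q.V) : Prop :=
  ∃ a : Q.A, (Q.src a = v ∧ Q.tgt a = w) ∨ (Q.src a = w ∧ Q.tgt a = v)

/-- Connectedness of the underlying graph of the quiver. -/
def Connected (Q : Quiv) : Prop := ∀ v w : Q.V, Relation.ReflTransGen (Adj Q) v w

/-- A quadratic monomial presentation: the relations are paths of length 2. -/
def IsQuadMon (Q : Quiv) (R : Set (Q.A × Q.A)) : Prop :=
  ∀ r ∈ R, Q.tgt r.1 = Q.src r.2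

/-- A gentle presentation. -/
structure IsGentle (Q : Quiv) (R : Set (Q.A × Q.A)) : Prop where
  nonempty : Nonempty Q.V
  connected : Connected Q
  relComposable : ∀ r ∈ R, Q.tgt r.1 = Q.src r.2
  srcLe : ∀ v : Q.V, {a : Q.A | Q.src a = v}.ncard ≤ 2
  tgtLe : ∀ v : Q.V, {a : Q.A | Q.tgt a = v}.ncard ≤ 2
  uniqNotRelAfter : ∀ a : Q.A, {b : Q.A | Q.tgt a = Q.src b ∧ (a, b) ∉ R}.Subsingleton
  uniqNotRelBefore : ∀ a : Q.A, {c : Q.A | Q.tgt c = Q.src a ∧ (c, a) ∉ R}.Subsingleton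
  uniqRelAfter : ∀ a : Q.A, {b : Q.A | Q.tgt a = Q.src b ∧ (a, b) ∈ R}.Subsingleton
  uniqRelBefore : ∀ a : Q.A, {c : Q.A | Q.tgt c = Q.src a ∧ (c, a) ∈ R}.Subsingleton

/-- A spanning tree of the (finite, connected) quiver `Q`: a set of arrows
which connects all vertices and has exactly `|Q₀| - 1` elements. -/
def IsSpanningTree (Q : Quiv) (T : Set Q.A) : Prop :=
  (∀ v w : Q.V, Relation.ReflTransGen
      (fun x y => ∃ a ∈ T, (Q.src a = x ∧ Q.tgt a = y) ∨ (Q.src a = y ∧ Q.tgt a = x)) v w) ∧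
  T.ncard + 1 = Fintype.card Q.V

/-- A set of representatives, one for each rotation class of cycles
satisfying `Pred`. -/
def IsRepSet (Q : Quiv) (P : Set (PathDat Q)) (Pred : PathDat Q → Prop) : Prop :=
  (∀ p ∈ P, Pred p) ∧ ∀ q : PathDat Q, Pred q → ∃! p, p ∈ P ∧ RotEquiv Q q p

/-- `S` is a valid choice of the paper's set `Crep` for the predicate `Pred`
(e.g. cocompleteness, or completeness): it consists of all positive powers of a
chosen set of representatives of the rotation classes of primitive cycles
satisfying `Pred`. -/
def IsCrep (Q : Quiv) (S : Set (PathDat Q)) (Pred : PathDat Q → Prop) : Prop :=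
  ∃ P : Set (PathDat Q),
    IsRepSet Q P (fun p => IsPrimitive Q p ∧ Pred p) ∧
    S = {x | ∃ p ∈ P, ∃ n : ℕ, 1 ≤ n ∧ x = powP Q p n}

/-! ### The cochain complex `k(Γ ∥ B)` -/

/-- Membership in the degree-`m` basis `Γ_m ∥ B` of the cochain complex. -/
def GBmem (Q : Quiv) (R : Set (Q.A × Q.A)) (m : ℕ) (x : PathDat Q × PathDat Q) : Prop :=
  InG Q R x.1 ∧ plen Q x.1 = m ∧ InB Q R x.2 ∧ Par Q x.1 x.2

abbrev GB (Q : Quiv) (R : Set (Q.A × Q.A)) (m : ℕ) :=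
  {x : PathDat Q × PathDat Q // GBmem Q R m x}

/-- The degree-`m` component of the cochain complex `k(Γ ∥ B)`. -/
abbrev Coch (k : Type) [Field k] (Q : Quiv) (R : Set (Q.A × Q.A)) (m : ℕ) :=
  GB Q R m →₀ k

/-- The basis vector of `k(Γ_m ∥ B)` attached to a raw pair of path data
(and `0` if the pair is not in `Γ_m ∥ B`). -/
noncomputable def bv (k : Type) [Field k] (Q : Quiv) (R : Set (Q.A × Q.A)) (m : ℕ)
    (x : PathDat Q × PathDat Q) : Coch k Q R m := by
  classical
  exact if h : GBmem Q R m x then Finsupp.single (⟨x, h⟩ : GB Q R m) (1 : k) else 0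

/-- Extension on the left (in the paper's notation): `p ↦ b p`. -/
def extL (Q : Quiv) (b : Q.A) (p : PathDat Q) : PathDat Q := (p.1, p.2 ++ [b])

/-- Extension on the right (in the paper's notation): `p ↦ p a`. -/
def extR (Q : Quiv) (a : Q.A) (p : PathDat Q) : PathDat Q := (Q.src a, a :: p.2)

/-- The differential on a basis element:
`d^m (γ, α) = Σ_b (bγ, bα) - (-1)^m Σ_a (γa, αa)`. -/
noncomputable def dB (k : Type) [Field k] (Q : Quiv) (R : Set (Q.A × Q.A)) (m : ℕ)
    (x : GB Q R m) : Coch k Q R (m + 1) := by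
  classical
  exact
    (∑ b : Q.A,
      if h : GBmem Q R (m + 1) (extL Q b x.val.1, extL Q b x.val.2) then
        Finsupp.single (⟨_, h⟩ : GB Q R (m + 1)) (1 : k) else 0)
    - ((-1 : k) ^ m) •
      (∑ a : Q.A,
        if h : Q.tgt a = psrc Q x.val.1 ∧
            GBmem Q R (m + 1) (extR Q a x.val.1, extR Q a x.val.2) then
          Finsupp.single (⟨_, h.2⟩ : GB Q R (m + 1)) (1 : k) else 0)

/-- The differential `d^m : k(Γ_m ∥ B) → k(Γ_{m+1} ∥ B)`. -/
noncomputable def dLin (k : Type) [Field k] (Q : Quiv) (R : Set (Q.A × Q.A)) (m : ℕ) :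
    Coch k Q R m →ₗ[k] Coch k Q R (m + 1) :=
  Finsupp.linearCombination k (dB k Q R m)

/-- The element `𝟙 = Σ_{i ∈ Q₀} (e_i, e_i)` (placed in degree `m`; it is the
intended element when `m = 0`). -/
noncomputable def oneD (k : Type) [Field k] (Q : Quiv) (R : Set (Q.A × Q.A)) (m : ℕ) :
    Coch k Q R m :=
  ∑ i : Q.V, bv k Q R m ((i, []), (i, []))

/-- `⟨α⟩ = Σ_{i=0}^{r-1} (s(rot^i α), rot^i α)`, `r` the period of `α`. -/
noncomputable def cycB (k : Type) [Field k] (Q : Quiv) (R : Set (Q.A × Q.A)) (m : ℕ)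
    (α : PathDat Q) : Coch k Q R m :=
  ∑ i ∈ Finset.range (periodP Q α),
    bv k Q R m ((psrc Q (rotI Q i α), []), rotI Q i α)

/-- `⟨C⟩ = Σ_{i=0}^{r-1} (-1)^{i m} (rot^i C, s(rot^i C))`, `r` the period of `C`. -/
noncomputable def cycG (k : Type) [Field k] (Q : Quiv) (R : Set (Q.A × Q.A)) (m : ℕ)
    (C : PathDat Q) : Coch k Q R m :=
  ∑ i ∈ Finset.range (periodP Q C),
    ((-1 : k) ^ (i * m)) • bv k Q R m (rotI Q i C, (psrc Q (rotI Q i C), []))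

/-- The coboundary subspace in degree `m` (zero in degree `0`). -/
noncomputable def cobSp (k : Type) [Field k] (Q : Quiv) (R : Set (Q.A × Q.A)) :
    (m : ℕ) → Submodule k (Coch k Q R m)
  | 0 => ⊥
  | m + 1 => LinearMap.range (dLin k Q R m)

/-- The cocycle subspace in degree `m`. -/
noncomputable def cocSp (k : Type) [Field k] (Q : Quiv) (R : Set (Q.A × Q.A)) (m : ℕ) :
    Submodule k (Coch k Q R m) :=
  LinearMap.ker (dLin k Q R m)

/-- The degree-`m` cohomology `HH^m` of the complex `k(Γ ∥ B)` vanishes: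
every cocycle is a coboundary. -/
def CohomIsZero (k : Type) [Field k] (Q : Quiv) (R : Set (Q.A × Q.A)) (m : ℕ) : Prop :=
  cocSp k Q R m ≤ cobSp k Q R m

/-- The degree-`m` cohomology `HH^m` of the complex `k(Γ ∥ B)` is
finite-dimensional: there is a finite set of cocycles whose classes span it. -/
def CohomFinDim (k : Type) [Field k] (Q : Quiv) (R : Set (Q.A × Q.A)) (m : ℕ) : Prop :=
  ∃ G : Finset (Coch k Q R m), ↑G ⊆ (cocSp k Q R m : Set (Coch k Q R m)) ∧
    cocSp k Q R m ≤ cobSp k Q R m ⊔ Submodule.span k ↑G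

/-- The degree-`m` cohomology `HH^m` of the complex `k(Γ ∥ B)` has dimension at
most `n`: there are `n` cocycles whose classes span it. -/
def CohomDimLe (k : Type) [Field k] (Q : Quiv) (R : Set (Q.A × Q.A)) (m n : ℕ) : Prop :=
  ∃ G : Finset (Coch k Q R m), G.card ≤ n ∧
    ↑G ⊆ (cocSp k Q R m : Set (Coch k Q R m)) ∧
    cocSp k Q R m ≤ cobSp k Q R m ⊔ Submodule.span k ↑G

/-- `Gen` is a basis of the kernel of `d⁰`, i.e. it freely generates `HH⁰`. -/
def FreelyGeneratesKer0 (k : Type) [Field k] (Q : Quiv) (R : Set (Q.A × Q.A))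
    (Gen : Set (Coch k Q R 0)) : Prop :=
  (∀ x ∈ Gen, dLin k Q R 0 x = 0) ∧
  (∀ z : Coch k Q R 0, dLin k Q R 0 z = 0 → z ∈ Submodule.span k Gen) ∧
  LinearIndependent k (fun x : Gen => (x : Coch k Q R 0))

/-- The cohomology classes of the elements of `Gen` freely generate the
degree-`(m+1)` cohomology of `k(Γ ∥ B)`: all elements of `Gen` are cocycles,
every cocycle is congruent to an element of their span modulo coboundaries, no
nonzero element of their span is a coboundary, and `Gen` is linearly
independent. -/
def FreelyGeneratesCohom (k : Type) [Field k] (Q : Quiv) (R : Set (Q.A × Q.A)) (m : ℕ)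
    (Gen : Set (Coch k Q R (m + 1))) : Prop :=
  (∀ x ∈ Gen, dLin k Q R (m + 1) x = 0) ∧
  (∀ z : Coch k Q R (m + 1), dLin k Q R (m + 1) z = 0 →
      ∃ y : Coch k Q R m, z - dLin k Q R m y ∈ Submodule.span k Gen) ∧
  (∀ x ∈ Submodule.span k Gen, x ∈ LinearMap.range (dLin k Q R m) → x = 0) ∧
  LinearIndependent k (fun x : Gen => (x : Coch k Q R (m + 1)))

/-! ### The chain complex `k(B ⊙ Γ)` -/

/-- Membership in the degree-`m` basis `B ⊙ Γ_m` of the chain complex. -/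
def BGmem (Q : Quiv) (R : Set (Q.A × Q.A)) (m : ℕ) (x : PathDat Q × PathDat Q) : Prop :=
  InB Q R x.1 ∧ InG Q R x.2 ∧ plen Q x.2 = m ∧ AntiPar Q x.1 x.2

abbrev BGt (Q : Quiv) (R : Set (Q.A × Q.A)) (m : ℕ) :=
  {x : PathDat Q × PathDat Q // BGmem Q R m x}

/-- The degree-`m` component of the chain complex `k(B ⊙ Γ)`. -/
abbrev Chn (k : Type) [Field k] (Q : Quiv) (R : Set (Q.A × Q.A)) (m : ℕ) :=
  BGt Q R m →₀ k

/-- The basis vector of `k(B ⊙ Γ_m)` attached to a raw pair of path data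
(and `0` if the pair is not in `B ⊙ Γ_m`). -/
noncomputable def bw (k : Type) [Field k] (Q : Quiv) (R : Set (Q.A × Q.A)) (m : ℕ)
    (x : PathDat Q × PathDat Q) : Chn k Q R m := by
  classical
  exact if h : BGmem Q R m x then Finsupp.single (⟨x, h⟩ : BGt Q R m) (1 : k) else 0

/-- `l1(p)`: the last arrow of `p` (as a path of length one). -/
def l1P (Q : Quiv) (p : PathDat Q) : PathDat Q :=
  match p.2.getLast? with
  | none => p
  | some a => (Q.src a, [a])

/-- `l2(p)`: `p` with its last arrow removed. -/
def l2P (Q : Quiv) (p : PathDat Q) : PathDat Q := (p.1, p.2.dropLast)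

/-- `r1(p)`: `p` with its first arrow removed. -/
def r1P (Q : Quiv) (p : PathDat Q) : PathDat Q :=
  match p.2 with
  | [] => p
  | a :: l => (Q.tgt a, l)

/-- `r2(p)`: the first arrow of `p` (as a path of length one). -/
def r2P (Q : Quiv) (p : PathDat Q) : PathDat Q :=
  match p.2 with
  | [] => p
  | a :: _ => (Q.src a, [a])

/-- The raw first term `(α·l1(γ), l2(γ))` of the boundary of `(α, γ)`. -/
def d1raw (Q : Quiv) (x : PathDat Q × PathDat Q) : PathDat Q × PathDat Q :=
  match x.2.2.getLast? with
  | none => x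
  | some a => ((Q.src a, a :: x.1.2), (x.2.1, x.2.2.dropLast))

/-- The raw second term `(r2(γ)·α, r1(γ))` of the boundary of `(α, γ)`. -/
def d2raw (Q : Quiv) (x : PathDat Q × PathDat Q) : PathDat Q × PathDat Q :=
  match x.2.2 with
  | [] => x
  | c :: l => ((x.1.1, x.1.2 ++ [c]), (Q.tgt c, l))

/-- The boundary of a basis element:
`d_m (α, γ) = (α·l1(γ), l2(γ)) + (-1)^m (r2(γ)·α, r1(γ))` (in degree `m = m+1`),
where pairs whose first component is not in `B` are interpreted as `0`. -/
noncomputable def bdB (k : Type) [Field k] (Q : Quiv) (R : Set (Q.A × Q.A)) (m : ℕ)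
    (x : BGt Q R (m + 1)) : Chn k Q R m :=
  bw k Q R m (d1raw Q x.val) + ((-1 : k) ^ (m + 1)) • bw k Q R m (d2raw Q x.val)

/-- The boundary map `d_{m+1} : k(B ⊙ Γ_{m+1}) → k(B ⊙ Γ_m)`. -/
noncomputable def bd (k : Type) [Field k] (Q : Quiv) (R : Set (Q.A × Q.A)) (m : ℕ) :
    Chn k Q R (m + 1) →ₗ[k] Chn k Q R m :=
  Finsupp.linearCombination k (bdB k Q R m)

/-- The subspace of cycles in degree `m` (everything in degree `0`). -/
noncomputable def ZSp (k : Type) [Field k] (Q : Quiv) (R : Set (Q.A × Q.A)) :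
    (m : ℕ) → Submodule k (Chn k Q R m)
  | 0 => ⊤
  | m + 1 => LinearMap.ker (bd k Q R m)

/-- The subspace of boundaries in degree `m`. -/
noncomputable def BSp (k : Type) [Field k] (Q : Quiv) (R : Set (Q.A × Q.A)) (m : ℕ) :
    Submodule k (Chn k Q R m) :=
  LinearMap.range (bd k Q R m)

/-- The degree-`m` homology `HH_m` of the complex `k(B ⊙ Γ)` vanishes:
every cycle is a boundary. -/
def HomIsZero (k : Type) [Field k] (Q : Quiv) (R : Set (Q.A × Q.A)) (m : ℕ) : Prop :=
  ZSp k Q R m ≤ BSp k Q R m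

/-- The degree-`m` homology `HH_m` of the complex `k(B ⊙ Γ)` is
finite-dimensional: there is a finite set of cycles whose classes span it. -/
def HomFinDim (k : Type) [Field k] (Q : Quiv) (R : Set (Q.A × Q.A)) (m : ℕ) : Prop :=
  ∃ G : Finset (Chn k Q R m), ↑G ⊆ (ZSp k Q R m : Set (Chn k Q R m)) ∧
    ZSp k Q R m ≤ BSp k Q R m ⊔ Submodule.span k ↑G

/-- The concatenation `α γ` of an antiparallel pair (a cycle, or a trivial path). -/
def concatP (Q : Quiv) (x : PathDat Q × PathDat Q) : PathDat Q := (x.2.1, x.2.2 ++ x.1.2)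

/-- The degree-`m` component of the subcomplex `k(B ⊙ Γ)_C`, spanned by the
basis elements whose concatenation lies in the circuit (rotation class) of `c`. -/
noncomputable def Wsp (k : Type) [Field k] (Q : Quiv) (R : Set (Q.A × Q.A))
    (c : PathDat Q) (m : ℕ) : Submodule k (Chn k Q R m) :=
  Submodule.span k {z : Chn k Q R m |
    ∃ x : BGt Q R m, RotEquiv Q (concatP Q x.val) c ∧ z = Finsupp.single x (1 : k)}

/-- The boundaries of the subcomplex `k(B ⊙ Γ)_C` in degree `m`. -/
noncomputable def WB (k : Type) [Field k] (Q : Quiv) (R : Set (Q.A × Q.A))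
    (c : PathDat Q) (m : ℕ) : Submodule k (Chn k Q R m) :=
  Submodule.map (bd k Q R m) (Wsp k Q R c (m + 1))

/-- The cycles of the subcomplex `k(B ⊙ Γ)_C` in degree `m`. -/
noncomputable def WZ (k : Type) [Field k] (Q : Quiv) (R : Set (Q.A × Q.A))
    (c : PathDat Q) (m : ℕ) : Submodule k (Chn k Q R m) :=
  ZSp k Q R m ⊓ Wsp k Q R c m

/-- The degree-`m` homology of `k(B ⊙ Γ)_C` is one-dimensional, spanned by the
homology class of `v`. -/
def SubHomSpannedBy (k : Type) [Field k] (Q : Quiv) (R : Set (Q.A × Q.A))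
    (c : PathDat Q) (m : ℕ) (v : Chn k Q R m) : Prop :=
  v ∈ WZ k Q R c m ∧ v ∉ WB k Q R c m ∧
  ∀ z ∈ WZ k Q R c m, ∃ t : k, z - t • v ∈ WB k Q R c m

/-- `ĥ(c) = Σ_{i=0}^{r-1} (r1(rot^i c), r2(rot^i c))` (degree 1, for cocomplete cycles;
placed in degree `m`). -/
noncomputable def hCycR (k : Type) [Field k] (Q : Quiv) (R : Set (Q.A × Q.A)) (m : ℕ)
    (c : PathDat Q) : Chn k Q R m :=
  ∑ i ∈ Finset.range (periodP Q c),
    bw k Q R m (r1P Q (rotI Q i c), r2P Q (rotI Q i c))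

/-- `ĥ(c) = Σ_{i=0}^{r-1} (-1)^{(m+1) i} (s(rot^i c), rot^i c)` (degree `m`, for
complete cycles of length `m`). -/
noncomputable def hCycM (k : Type) [Field k] (Q : Quiv) (R : Set (Q.A × Q.A)) (m : ℕ)
    (c : PathDat Q) : Chn k Q R m :=
  ∑ i ∈ Finset.range (periodP Q c),
    ((-1 : k) ^ ((m + 1) * i)) • bw k Q R m ((psrc Q (rotI Q i c), []), rotI Q i c)

/-- The homology classes of the elements of `Gen` freely generate the degree-`m`
homology of `k(B ⊙ Γ)`. -/
def FreelyGeneratesHom (k : Type) [Field k] (Q : Quiv) (R : Set (Q.A × Q.A)) (m : ℕ)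
    (Gen : Set (Chn k Q R m)) : Prop :=
  (∀ x ∈ Gen, x ∈ ZSp k Q R m) ∧
  (∀ z ∈ ZSp k Q R m, ∃ y : Chn k Q R (m + 1), z - bd k Q R m y ∈ Submodule.span k Gen) ∧
  (∀ x ∈ Submodule.span k Gen, x ∈ LinearMap.range (bd k Q R m) → x = 0) ∧
  LinearIndependent k (fun x : Gen => (x : Chn k Q R m))

/-!
Applying `d` twice to `(γ, α)` extends both paths twice. Two extensions on the same side give
paths ending (or starting) with the same length-two path, which would have to lie in `R` for
the `Γ`-component and outside `R` for the `B`-component, so these terms vanish. A two-sided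
extension `(aγb, aαb)` is produced twice, extending first by `b` (sign `-(-1)^(m+1)`) or first
by `a` (sign `-(-1)^m`), and the two contributions cancel.
-/

section Paths

variable {Q : Quiv} {R : Set (Q.A × Q.A)}

theorem InG.not_InB_of_infix {p q : PathDat Q} {u v : Q.A} (hp : InG Q R p)
    (hup : [u, v] <:+: p.2) (huq : [u, v] <:+: q.2) : ¬ InB Q R q := fun hq =>
  List.isChain_pair.mp (hq.2.infix huq) (List.isChain_pair.mp (hp.2.infix hup))

theorem ok_and_isChain_of_extL {r : Q.A → Q.A → Prop} {b : Q.A} {p : PathDat Q}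
    (h : Ok Q (extL Q b p) ∧ (extL Q b p).2.IsChain r) : Ok Q p ∧ p.2.IsChain r := by
  obtain ⟨⟨hcomp, hsrc⟩, hr⟩ := h
  have hpre : p.2 <+: p.2 ++ [b] := List.prefix_append _ _
  refine ⟨⟨hcomp.prefix hpre, fun c hc => hsrc c ?_⟩, hr.prefix hpre⟩
  obtain ⟨l, hl⟩ := List.head?_eq_some_iff.mp hc
  simp [extL, hl]

theorem ok_and_isChain_of_extR {r : Q.A → Q.A → Prop} {a : Q.A} {p : PathDat Q}
    (ha : Q.tgt a = p.1) (h : Ok Q (extR Q a p) ∧ (extR Q a p).2.IsChain r) :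
    Ok Q p ∧ p.2.IsChain r := by
  obtain ⟨⟨hcomp, -⟩, hr⟩ := h
  refine ⟨⟨hcomp.tail, fun c hc => ?_⟩, hr.tail⟩
  obtain ⟨l, hl⟩ := List.head?_eq_some_iff.mp hc
  rw [extR, hl] at hcomp
  exact (List.isChain_cons_cons.mp hcomp).1.symm.trans ha

theorem ptgt_extL (b : Q.A) (p : PathDat Q) : ptgt Q (extL Q b p) = Q.tgt b := by
  simp [ptgt, extL]

theorem ptgt_extR {a : Q.A} {p : PathDat Q} (ha : Q.tgt a = p.1) :
    ptgt Q (extR Q a p) = ptgt Q p := by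
  rcases List.eq_nil_or_concat p.2 with hp | ⟨l, c, hl⟩
  · simp [ptgt, extR, hp, ha]
  · simp [ptgt, extR, hl, List.getLast?_cons]

end Paths

section Pairs

variable {Q : Quiv} {R : Set (Q.A × Q.A)}

def extLPair (Q : Quiv) (b : Q.A) (x : PathDat Q × PathDat Q) : PathDat Q × PathDat Q :=
  (extL Q b x.1, extL Q b x.2)

def extRPair (Q : Quiv) (a : Q.A) (x : PathDat Q × PathDat Q) : PathDat Q × PathDat Q :=
  (extR Q a x.1, extR Q a x.2)

theorem extLPair_extRPair (a b : Q.A) (x : PathDat Q × PathDat Q) :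
    extLPair Q b (extRPair Q a x) = extRPair Q a (extLPair Q b x) := rfl

theorem not_GBmem_extLPair_extLPair {n : ℕ} (b b' : Q.A) (x : PathDat Q × PathDat Q) :
    ¬ GBmem Q R n (extLPair Q b' (extLPair Q b x)) := fun h =>
  h.1.not_InB_of_infix (u := b) (v := b')
    (by simpa [extLPair, extL] using (List.suffix_append x.1.2 [b, b']).isInfix)
    (by simpa [extLPair, extL] using (List.suffix_append x.2.2 [b, b']).isInfix) h.2.2.1

theorem not_GBmem_extRPair_extRPair {n : ℕ} (a a' : Q.A) (x : PathDat Q × PathDat Q) :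
    ¬ GBmem Q R n (extRPair Q a' (extRPair Q a x)) := fun h =>
  h.1.not_InB_of_infix (List.infix_append [] _ _) (List.infix_append [] _ _) h.2.2.1

theorem GBmem_extLPair_of_extRPair_extLPair {m : ℕ} {x : PathDat Q × PathDat Q}
    {a b : Q.A} (hx : GBmem Q R m x) (ha : Q.tgt a = psrc Q x.1)
    (h : GBmem Q R (m + 2) (extRPair Q a (extLPair Q b x))) :
    GBmem Q R (m + 1) (extLPair Q b x) :=
  ⟨ok_and_isChain_of_extR ha h.1, by simp [extLPair, extL, plen, hx.2.1.symm],
    ok_and_isChain_of_extR (ha.trans hx.2.2.2.1) h.2.2.1, hx.2.2.2.1,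
    (ptgt_extL b _).trans (ptgt_extL b _).symm⟩

theorem GBmem_extRPair_of_extRPair_extLPair {m : ℕ} {x : PathDat Q × PathDat Q}
    {a b : Q.A} (hx : GBmem Q R m x) (ha : Q.tgt a = psrc Q x.1)
    (h : GBmem Q R (m + 2) (extRPair Q a (extLPair Q b x))) :
    GBmem Q R (m + 1) (extRPair Q a x) :=
  ⟨ok_and_isChain_of_extL h.1, by simp [extRPair, extR, plen, hx.2.1.symm],
    ok_and_isChain_of_extL h.2.2.1, rfl,
    (ptgt_extR ha).trans (hx.2.2.2.2.trans (ptgt_extR (ha.trans hx.2.2.2.1)).symm)⟩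

end Pairs

section Differential

variable (k : Type) [Field k] {Q : Quiv} {R : Set (Q.A × Q.A)}

noncomputable def dFormula (n : ℕ) (x : PathDat Q × PathDat Q) : Coch k Q R (n + 1) :=
  ∑ b : Q.A, bv k Q R (n + 1) (extLPair Q b x) - ((-1 : k) ^ n) •
    ∑ a ∈ Finset.univ.filter (fun a => Q.tgt a = psrc Q x.1), bv k Q R (n + 1) (extRPair Q a x)

theorem bv_of_GBmem {n : ℕ} {x : PathDat Q × PathDat Q} (h : GBmem Q R n x) :
    bv k Q R n x = Finsupp.single ⟨x, h⟩ 1 :=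
  dif_pos h

theorem bv_of_not_GBmem {n : ℕ} {x : PathDat Q × PathDat Q} (h : ¬ GBmem Q R n x) :
    bv k Q R n x = 0 :=
  dif_neg h

theorem dB_eq_dFormula (n : ℕ) (x : GB Q R n) : dB k Q R n x = dFormula k n x.1 := by
  rw [dB, dFormula, Finset.sum_filter]
  congr 2
  refine Finset.sum_congr rfl fun a _ => ?_
  by_cases ha : Q.tgt a = psrc Q x.1.1
  · rw [if_pos ha]
    by_cases h : GBmem Q R (n + 1) (extRPair Q a x.1)
    · rw [dif_pos ⟨ha, h⟩, bv_of_GBmem k h]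
      rfl
    · rw [dif_neg fun h' => h h'.2, bv_of_not_GBmem k h]
  · rw [if_neg ha, dif_neg fun h' => ha h'.1]

theorem dLin_single (n : ℕ) (y : GB Q R n) (c : k) :
    dLin k Q R n (Finsupp.single y c) = c • dB k Q R n y :=
  Finsupp.linearCombination_single k c y

theorem dLin_bv_of_GBmem {n : ℕ} {x : PathDat Q × PathDat Q} (h : GBmem Q R n x) :
    dLin k Q R n (bv k Q R n x) = dFormula k n x := by
  rw [bv_of_GBmem k h, dLin_single, one_smul, dB_eq_dFormula]

theorem dLin_bv_extLPair {n : ℕ} {x : PathDat Q × PathDat Q} (hx : GBmem Q R n x) (b : Q.A) :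
    dLin k Q R (n + 1) (bv k Q R (n + 1) (extLPair Q b x)) = ((-1 : k) ^ n) •
      ∑ a ∈ Finset.univ.filter (fun a => Q.tgt a = psrc Q x.1),
        bv k Q R (n + 2) (extRPair Q a (extLPair Q b x)) := by
  by_cases hb : GBmem Q R (n + 1) (extLPair Q b x)
  · rw [dLin_bv_of_GBmem k hb, dFormula,
      Finset.sum_eq_zero fun b' _ => bv_of_not_GBmem k (not_GBmem_extLPair_extLPair b b' x),
      zero_sub, ← neg_smul, pow_succ, mul_neg_one, neg_neg]
    rfl
  · rw [bv_of_not_GBmem k hb, map_zero, Finset.sum_eq_zero, smul_zero]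
    intro a ha
    exact bv_of_not_GBmem k fun h =>
      hb (GBmem_extLPair_of_extRPair_extLPair hx (Finset.mem_filter.mp ha).2 h)

theorem dLin_bv_extRPair {n : ℕ} {x : PathDat Q × PathDat Q} (hx : GBmem Q R n x) {a : Q.A}
    (ha : Q.tgt a = psrc Q x.1) :
    dLin k Q R (n + 1) (bv k Q R (n + 1) (extRPair Q a x)) =
      ∑ b : Q.A, bv k Q R (n + 2) (extRPair Q a (extLPair Q b x)) := by
  by_cases ha' : GBmem Q R (n + 1) (extRPair Q a x)
  · rw [dLin_bv_of_GBmem k ha', dFormula,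
      Finset.sum_eq_zero fun a' _ => bv_of_not_GBmem k (not_GBmem_extRPair_extRPair a a' x),
      smul_zero, sub_zero]
    simp only [extLPair_extRPair]
  · rw [bv_of_not_GBmem k ha', map_zero, Finset.sum_eq_zero]
    exact fun b _ => bv_of_not_GBmem k fun h =>
      ha' (GBmem_extRPair_of_extRPair_extLPair hx ha h)

theorem dLin_dFormula {n : ℕ} {x : PathDat Q × PathDat Q} (hx : GBmem Q R n x) :
    dLin k Q R (n + 1) (dFormula k n x) = 0 := by
  rw [dFormula, map_sub, map_smul, map_sum, map_sum,
    Finset.sum_congr rfl fun b _ => dLin_bv_extLPair k hx b,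
    Finset.sum_congr rfl fun a ha => dLin_bv_extRPair k hx (Finset.mem_filter.mp ha).2,
    ← Finset.smul_sum, Finset.sum_comm, sub_self]

end Differential

theorem gamma_parallel_B_is_complex_general (k : Type) [Field k] (Q : Quiv)
    (R : Set (Q.A × Q.A)) (m : ℕ) (x : Coch k Q R m) :
    dLin k Q R (m + 1) (dLin k Q R m x) = 0 := by
  have hdd : (dLin k Q R (m + 1)).comp (dLin k Q R m) = 0 :=
    Finsupp.lhom_ext fun y c => by
      rw [LinearMap.comp_apply, dLin_single, map_smul,
        dB_eq_dFormula, dLin_dFormula k y.2, smul_zero, LinearMap.zero_apply]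
  exact LinearMap.congr_fun hdd x

/-- For a gentle presentation `(Q, R)`, the graded vector space
`k(Γ ∥ B)` with the differentials `d^m` is a cochain complex: `d^{m+1} ∘ d^m = 0`. -/
theorem gamma_parallel_B_is_complex (k : Type) [Field k] (Q : Quiv)
    (R : Set (Q.A × Q.A)) (hg : IsGentle Q R) (m : ℕ) (x : Coch k Q R m) :
    dLin k Q R (m + 1) (dLin k Q R m x) = 0 :=
  gamma_parallel_B_is_complex_general k Q R m x

end GentleTT
end

section
/- Let (Q,R) be a gentle presentation, let C be a complete cycle of length m and period r with first arrow b, and set ⟨C⟩ = Σ_{i=0}^{r−1} (−1)^{im} (rot^i(C), s(rot^i(C))) ∈ k(Γ_m∥B). Then d^m(⟨C⟩) = (1 − (−1)^m)·(bC, b). In particular, ⟨C⟩ is an m-cocycle of the complex k(Γ∥B) if and only if m is even or the characteristic of k is 2. -/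
/-!
Common framework: quivers, paths (as a start vertex together with a list of
composable arrows, listed in order of traversal, so that the paper's path
`c_m ⋯ c_1` corresponds to the list `[c_1, …, c_m]`), gentle and quadratic
monomial presentations, the cochain complex `k(Γ ∥ B)` and the chain complex
`k(B ⊙ Γ)` of the paper.
-/

namespace GentleTT

/-!
Since `C² ∈ Γ`, gentleness leaves exactly one way to extend `(rot^i C, e)` inside `Γ ∥ B` on
each side: on the left by the first arrow of `rot^i C`, on the right by its last arrow, and the
right extension of `rot^i C` is the left extension of `rot^{i+1} C`. With the signs
`(-1)^{im}`, `d⟨C⟩` therefore telescopes to `(1 - (-1)^{rm}) (bC, b)`, and `(-1)^{rm} = (-1)^m`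
because the period `r` divides `m`.
-/

theorem isChain_doubled_rotate {α : Type} {r : α → α → Prop} {t : List α} {a : α}
    (h : ((t ++ [a]) ++ (t ++ [a])).IsChain r) : ((a :: t) ++ (a :: t)).IsChain r := by
  have htripled : ((t ++ [a]) ++ ((t ++ [a]) ++ (t ++ [a]))).IsChain r := by
    refine List.isChain_append.mpr ⟨h.prefix (List.prefix_append _ _), h, ?_⟩
    intro x hx y hy
    rw [List.head?_append_of_ne_nil _ (by simp)] at hy
    exact (List.isChain_append.mp h).2.2 x hx y hy
  exact htripled.infix ⟨t, [a], by simp⟩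

theorem rotP_append_singleton (Q : Quiv) (v : Q.V) (t : List Q.A) (a : Q.A) :
    rotP Q (v, t ++ [a]) = (Q.src a, a :: t) := by
  simp [rotP]

theorem rotP_snd (Q : Quiv) (p : PathDat Q) :
    (rotP Q p).2 = (p.2.reverse.rotate 1).reverse := by
  obtain ⟨v, l⟩ := p
  induction l using List.reverseRecOn with
  | nil => simp [rotP]
  | append_singleton t a _ => simp [rotP_append_singleton, List.rotate_cons_succ]

theorem rotI_succ (Q : Quiv) (i : ℕ) (p : PathDat Q) :
    rotI Q (i + 1) p = rotP Q (rotI Q i p) :=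
  Function.iterate_succ_apply' _ _ _

theorem rotI_snd (Q : Quiv) (p : PathDat Q) (i : ℕ) :
    (rotI Q i p).2 = (p.2.reverse.rotate i).reverse := by
  induction i with
  | zero => simp [rotI]
  | succ n ih => simp [rotI_succ, rotP_snd, ih, List.rotate_rotate]

/-- The pair `(bp, b)` of `Γ ∥ B`, where `b` is the first arrow of `p`. -/
def headExtPair (Q : Quiv) (p : PathDat Q) : PathDat Q × PathDat Q :=
  ((p.1, p.2 ++ p.2.take 1), (p.1, p.2.take 1))

theorem headExtPair_of_head {Q : Quiv} {p : PathDat Q} {h : Q.A} (hh : p.2.head? = some h) :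
    headExtPair Q p = (extL Q h p, extL Q h (p.1, [])) := by
  obtain ⟨v, _ | ⟨c, l⟩⟩ := p <;> simp_all [headExtPair, extL]

theorem headExtPair_rotP {Q : Quiv} {p : PathDat Q} {t : List Q.A} {a : Q.A}
    (hta : p.2 = t ++ [a]) :
    headExtPair Q (rotP Q p) = (extR Q a p, extR Q a (p.1, [])) := by
  obtain ⟨v, l⟩ := p
  subst hta
  simp [rotP_append_singleton, headExtPair, extR]

/-- `Complete` together with `plen = m`, read on the doubled arrow list so that it is visibly
stable under rotation. -/
structure IsCompleteOfLength (Q : Quiv) (R : Set (Q.A × Q.A)) (m : ℕ) (p : PathDat Q) :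
    Prop where
  ne_nil : p.2 ≠ []
  length_eq : p.2.length = m
  src_head : ∀ a ∈ p.2.head?, Q.src a = p.1
  composable : (p.2 ++ p.2).IsChain (fun a b => Q.tgt a = Q.src b)
  related : (p.2 ++ p.2).IsChain (fun a b => (a, b) ∈ R)

namespace IsCompleteOfLength

variable {Q : Quiv} {R : Set (Q.A × Q.A)} {m : ℕ} {p : PathDat Q}

theorem exists_head (hp : IsCompleteOfLength Q R m p) : ∃ h, p.2.head? = some h :=
  ⟨p.2.head hp.ne_nil, List.head?_eq_some_head hp.ne_nil⟩

theorem exists_last (hp : IsCompleteOfLength Q R m p) : ∃ t a, p.2 = t ++ [a] := by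
  simpa using (List.eq_nil_or_concat p.2).resolve_left hp.ne_nil

theorem last_head (hp : IsCompleteOfLength Q R m p) {a h : Q.A} (hl : p.2.getLast? = some a)
    (hh : p.2.head? = some h) : Q.tgt a = Q.src h ∧ (a, h) ∈ R :=
  ⟨(List.isChain_append.mp hp.composable).2.2 a hl h hh,
    (List.isChain_append.mp hp.related).2.2 a hl h hh⟩

theorem of_complete (hC : Complete Q R p) (hm : plen Q p = m) : IsCompleteOfLength Q R m p := by
  have hsq : (powP Q p 2).2 = p.2 ++ p.2 := by simp [powP, powL]
  exact ⟨hC.1.2.1, hm, hC.1.1.2, hsq ▸ hC.2.1.1, hsq ▸ hC.2.2⟩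

theorem rotP (hp : IsCompleteOfLength Q R m p) : IsCompleteOfLength Q R m (rotP Q p) := by
  obtain ⟨t, a, hta⟩ := hp.exists_last
  have hrot : GentleTT.rotP Q p = (Q.src a, a :: t) := by
    rw [← rotP_append_singleton Q p.1, ← hta]
  rw [hrot]
  refine ⟨by simp, by simpa [hta] using hp.length_eq, by simp, ?_, ?_⟩
  · exact isChain_doubled_rotate (hta ▸ hp.composable)
  · exact isChain_doubled_rotate (hta ▸ hp.related)

theorem rotI (hp : IsCompleteOfLength Q R m p) (i : ℕ) :
    IsCompleteOfLength Q R m (GentleTT.rotI Q i p) := by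
  induction i with
  | zero => exact hp
  | succ n ih => rw [rotI_succ]; exact ih.rotP

theorem isPeriodicPt (hp : IsCompleteOfLength Q R m p) :
    Function.IsPeriodicPt (GentleTT.rotP Q) m p := by
  change GentleTT.rotI Q m p = p
  have hsnd : (GentleTT.rotI Q m p).2 = p.2 := by
    rw [rotI_snd, ← hp.length_eq, ← List.length_reverse, List.rotate_length,
      List.reverse_reverse]
  obtain ⟨b, hb⟩ := hp.exists_head
  refine Prod.ext ?_ hsnd
  rw [← (hp.rotI m).src_head b (hsnd ▸ hb), hp.src_head b hb]

theorem ptgt_eq (hp : IsCompleteOfLength Q R m p) : ptgt Q p = p.1 := by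
  obtain ⟨h, hh⟩ := hp.exists_head
  obtain ⟨t, a, hta⟩ := hp.exists_last
  have hl : p.2.getLast? = some a := by simp [hta]
  simp [ptgt, hl, (hp.last_head hl hh).1, hp.src_head h hh]

theorem mem_trivial (hp : IsCompleteOfLength Q R m p) : GBmem Q R m (p, (p.1, [])) := by
  refine ⟨⟨⟨hp.composable.prefix (List.prefix_append _ _), hp.src_head⟩,
    hp.related.prefix (List.prefix_append _ _)⟩, hp.length_eq, ⟨⟨.nil, by simp⟩, .nil⟩,
    rfl, hp.ptgt_eq⟩

theorem mem_extL (hp : IsCompleteOfLength Q R m p) {h : Q.A} (hh : p.2.head? = some h) :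
    GBmem Q R (m + 1) (extL Q h p, extL Q h (p.1, [])) := by
  have hsrc : Q.src h = p.1 := hp.src_head h hh
  have hpre : p.2 ++ [h] <+: p.2 ++ p.2 := by
    obtain ⟨v, _ | ⟨c, l⟩⟩ := p <;> simp_all
  refine ⟨⟨⟨hp.composable.prefix hpre, ?_⟩, hp.related.prefix hpre⟩, ?_,
    ⟨⟨.singleton _, by simpa [extL] using hsrc⟩, .singleton _⟩, rfl, ?_⟩
  · simpa [extL, List.head?_append_of_ne_nil _ hp.ne_nil, hh] using hsrc
  · simp [extL, plen, hp.length_eq]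
  · simp [extL, ptgt]

theorem eq_of_mem_extL (hg : IsGentle Q R) (hp : IsCompleteOfLength Q R m p) {h b : Q.A}
    (hh : p.2.head? = some h) (hb : GBmem Q R (m + 1) (extL Q b p, extL Q b (p.1, []))) :
    b = h := by
  obtain ⟨t, a, hta⟩ := hp.exists_last
  have hl : p.2.getLast? = some a := by simp [hta]
  exact hg.uniqRelAfter a ⟨(List.isChain_append.mp hb.1.1.1).2.2 a hl b rfl,
    (List.isChain_append.mp hb.1.2).2.2 a hl b rfl⟩ (hp.last_head hl hh)

theorem eq_of_mem_extR (hg : IsGentle Q R) (hp : IsCompleteOfLength Q R m p) {t : List Q.A}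
    {a c : Q.A} (hta : p.2 = t ++ [a])
    (hc : GBmem Q R (m + 1) (extR Q c p, extR Q c (p.1, []))) : c = a := by
  obtain ⟨h, hh⟩ := hp.exists_head
  have hl : p.2.getLast? = some a := by simp [hta]
  have hcomp : (c :: p.2).IsChain (fun a b => Q.tgt a = Q.src b) := hc.1.1.1
  have hrel : (c :: p.2).IsChain (fun a b => (a, b) ∈ R) := hc.1.2
  rw [List.eq_cons_of_mem_head? hh, List.isChain_cons_cons] at hcomp hrel
  exact hg.uniqRelBefore h ⟨hcomp.1, hrel.1⟩ (hp.last_head hl hh)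

end IsCompleteOfLength

section Differential

variable {k : Type} [Field k] {Q : Quiv} {R : Set (Q.A × Q.A)} {m : ℕ}

theorem bv_ne_zero {x : PathDat Q × PathDat Q} (hx : GBmem Q R m x) : bv k Q R m x ≠ 0 := by
  simp [bv, hx]

theorem bv_eq_zero {x : PathDat Q × PathDat Q} (hx : ¬ GBmem Q R m x) : bv k Q R m x = 0 := by
  simp [bv, hx]

theorem dLin_bv {x : PathDat Q × PathDat Q} (hx : GBmem Q R m x) :
    dLin k Q R m (bv k Q R m x) = dB k Q R m ⟨x, hx⟩ := by
  rw [bv, dif_pos hx, dLin, Finsupp.linearCombination_single, one_smul]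

theorem dB_eq_sum (x : GB Q R m) :
    dB k Q R m x =
      ∑ b, bv k Q R (m + 1) (extL Q b x.1.1, extL Q b x.1.2) -
      (-1 : k) ^ m • ∑ a with Q.tgt a = psrc Q x.1.1,
        bv k Q R (m + 1) (extR Q a x.1.1, extR Q a x.1.2) := by
  rw [dB, Finset.sum_filter]
  congr 2
  refine Finset.sum_congr rfl fun a _ => ?_
  by_cases ha : Q.tgt a = psrc Q x.1.1 <;>
    by_cases hG : GBmem Q R (m + 1) (extR Q a x.1.1, extR Q a x.1.2) <;> simp [ha, hG, bv]

end Differential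

theorem dLin_bv_of_isCompleteOfLength (k : Type) [Field k] {Q : Quiv} {R : Set (Q.A × Q.A)}
    {m : ℕ} {p : PathDat Q} (hg : IsGentle Q R) (hp : IsCompleteOfLength Q R m p) :
    dLin k Q R m (bv k Q R m (p, (p.1, []))) =
      bv k Q R (m + 1) (headExtPair Q p) -
        (-1 : k) ^ m • bv k Q R (m + 1) (headExtPair Q (rotP Q p)) := by
  obtain ⟨h, hh⟩ := hp.exists_head
  obtain ⟨t, a, hta⟩ := hp.exists_last
  have hta_tgt : Q.tgt a = psrc Q p := by
    rw [psrc, ← hp.src_head h hh]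
    exact (hp.last_head (by simp [hta]) hh).1
  rw [dLin_bv hp.mem_trivial, dB_eq_sum, headExtPair_of_head hh, headExtPair_rotP hta]
  congr 2
  · exact Fintype.sum_eq_single h fun b hbh =>
      bv_eq_zero (mt (hp.eq_of_mem_extL hg hh) hbh)
  · exact Finset.sum_eq_single_of_mem a (by simpa using hta_tgt) fun c _ hca =>
      bv_eq_zero (mt (hp.eq_of_mem_extR hg hta) hca)

theorem periodP_eq_minimalPeriod {Q : Quiv} {p : PathDat Q} {n : ℕ} (hn : 0 < n)
    (hp : Function.IsPeriodicPt (rotP Q) n p) :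
    periodP Q p = Function.minimalPeriod (rotP Q) p :=
  le_antisymm (Nat.sInf_le ⟨hp.minimalPeriod_pos hn, Function.iterate_minimalPeriod⟩)
    (le_csInf ⟨n, hn, hp⟩ fun _ hi => Function.IsPeriodicPt.minimalPeriod_le hi.1 hi.2)

theorem neg_one_pow_mul_of_dvd {M : Type*} [Monoid M] [HasDistribNeg M] {r m : ℕ} (h : r ∣ m) :
    (-1 : M) ^ (r * m) = (-1) ^ m := by
  rcases Nat.even_or_odd m with hm | hm
  · rw [(hm.mul_left r).neg_one_pow, hm.neg_one_pow]
  · rw [((hm.of_dvd_nat h).mul hm).neg_one_pow, hm.neg_one_pow]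

theorem one_sub_neg_one_pow_eq_zero_iff {k : Type} [Field k] {m : ℕ} :
    1 - (-1 : k) ^ m = 0 ↔ Even m ∨ ringChar k = 2 := by
  rw [sub_eq_zero, eq_comm, ← neg_one_eq_one_iff]
  by_cases h : (-1 : k) = 1
  · simp [h]
  · simp [h, neg_one_pow_eq_one_iff_even h]

theorem dLin_cycG (k : Type) [Field k] {Q : Quiv} {R : Set (Q.A × Q.A)} {m : ℕ}
    {C : PathDat Q} (hg : IsGentle Q R) (hC : IsCompleteOfLength Q R m C) :
    dLin k Q R m (cycG k Q R m C) = (1 - (-1 : k) ^ m) • bv k Q R (m + 1) (headExtPair Q C) := by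
  have hm_pos : 0 < m := hC.length_eq ▸ List.length_pos_iff.mpr hC.ne_nil
  have hper : periodP Q C = Function.minimalPeriod (rotP Q) C :=
    periodP_eq_minimalPeriod hm_pos hC.isPeriodicPt
  set L : ℕ → Coch k Q R (m + 1) := fun i => bv k Q R (m + 1) (headExtPair Q (rotI Q i C))
  have hstep : ∀ i, dLin k Q R m
      ((-1 : k) ^ (i * m) • bv k Q R m (rotI Q i C, (psrc Q (rotI Q i C), []))) =
        (-1 : k) ^ (i * m) • L i - (-1 : k) ^ ((i + 1) * m) • L (i + 1) := by
    intro i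
    rw [map_smul, psrc, dLin_bv_of_isCompleteOfLength k hg (hC.rotI i), smul_sub, smul_smul,
      ← pow_add, add_mul, one_mul, ← rotI_succ]
  have hLr : L (periodP Q C) = L 0 := by
    simp only [L, hper]
    rw [rotI, Function.iterate_minimalPeriod]
    rfl
  rw [cycG, map_sum, Finset.sum_congr rfl fun i _ => hstep i,
    Finset.sum_range_sub' (fun i => (-1 : k) ^ (i * m) • L i), hLr, zero_mul, pow_zero,
    one_smul, neg_one_pow_mul_of_dvd (hper ▸ hC.isPeriodicPt.minimalPeriod_dvd), sub_smul,
    one_smul]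
  rfl

/-- For a gentle presentation `(Q, R)` and a complete cycle `C`
of length `m` with first arrow `b`, the cochain
`⟨C⟩ = Σ_{i=0}^{r-1} (-1)^{i m} (rot^i C, s(rot^i C))` satisfies
`d^m ⟨C⟩ = (1 - (-1)^m) • (bC, b)`; in particular `⟨C⟩` is a cocycle if and
only if `m` is even or `char k = 2`. -/
theorem d_of_complete_cycle_cochain (k : Type) [Field k] (Q : Quiv)
    (R : Set (Q.A × Q.A)) (hg : IsGentle Q R) (C : PathDat Q) (m : ℕ)
    (hC : Complete Q R C) (hm : plen Q C = m) (b : Q.A) (hb : C.2.head? = some b) :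
    dLin k Q R m (cycG k Q R m C) =
      (1 - (-1 : k) ^ m) • bv k Q R (m + 1) ((C.1, C.2 ++ [b]), (Q.src b, [b])) ∧
    (dLin k Q R m (cycG k Q R m C) = 0 ↔ (Even m ∨ ringChar k = 2)) := by
  have hP := IsCompleteOfLength.of_complete hC hm
  have hpair : headExtPair Q C = ((C.1, C.2 ++ [b]), (Q.src b, [b])) := by
    rw [headExtPair_of_head hb, hP.src_head b hb]
    rfl
  have hmem : GBmem Q R (m + 1) (headExtPair Q C) := by
    rw [headExtPair_of_head hb]
    exact hP.mem_extL hb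
  have hd := dLin_cycG k hg hP
  refine ⟨hpair ▸ hd, ?_⟩
  rw [hd, smul_eq_zero, or_iff_left (bv_ne_zero hmem), one_sub_neg_one_pow_eq_zero_iff]

end GentleTT
end
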